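/- arXiv:1007.2178 — 2 statements merged into one kernel-verified Lean document; each statement's English description precedes it below -/
import Mathlib

section
/- Let w(x) = Σ_{k≥0} a_k x^k be a formal power series over a commutative ℚ-algebra (or over ℝ) with a_0 invertible (a_0 ≠ 0), and let m be a positive integer. If w(x)^m = Σ_{k≥0} c_k x^k, then c_0 = a_0^m and for all k ≥ 1, k·a_0·c_k = Σ_{j=1}^{k} ((m+1)·j − k)·a_j·c_{k−j}. -/
/-!
Differentiating `w ^ m` gives `w * (w ^ m)' = m * w' * w ^ m`. Multiplying by `X` turns `d/dX` into
the Euler operator `X * d/dX`, which multiplies the coefficient of `X ^ k` by `k`, so comparing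
coefficients of `X ^ k` yields `∑_{i + j = k} (m * i - j) * a i * c j = 0`. Splitting off the term
`i = 0` and writing `m * i - j = (m + 1) * i - k` gives the recurrence.
-/

open PowerSeries Finset

theorem Derivation.smul_leibniz_pow {R A M : Type*} [CommSemiring R] [CommSemiring A]
    [Algebra R A] [AddCommMonoid M] [Module A M] [Module R M] [IsScalarTower R A M]
    (D : Derivation R A M) (a : A) (n : ℕ) :
    a • D (a ^ n) = n • a ^ n • D a := by
  induction n with
  | zero => simp
  | succ n ih =>
    rw [pow_succ, D.leibniz, smul_add, ih, smul_comm a n, ← mul_smul, mul_comm a,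
      succ_nsmul, add_comm]

namespace PowerSeries

variable {R : Type*}

theorem coeff_X_mul_derivative [CommSemiring R] (f : R⟦X⟧) (k : ℕ) :
    coeff k (X * d⁄dX R f) = k * coeff k f := by
  cases k with
  | zero => simp
  | succ k => rw [coeff_succ_X_mul, coeff_derivative, mul_comm, Nat.cast_succ]

theorem sum_antidiagonal_coeff_pow [CommRing R] (w : R⟦X⟧) (m k : ℕ) :
    ∑ p ∈ antidiagonal k, (m * p.1 - p.2 : R) * coeff p.1 w * coeff p.2 (w ^ m) = 0 := by
  have hlogDeriv : m • ((X * d⁄dX R w) * w ^ m) - w * (X * d⁄dX R (w ^ m)) = 0 := by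
    rw [mul_left_comm, ← smul_eq_mul w, (d⁄dX R).smul_leibniz_pow, smul_eq_mul, mul_smul_comm]
    ring
  have h := congrArg (coeff k) hlogDeriv
  rw [map_sub, map_nsmul, coeff_mul, coeff_mul, map_zero, nsmul_eq_mul, mul_sum,
    ← sum_sub_distrib] at h
  simp only [coeff_X_mul_derivative] at h
  rw [← h]
  exact sum_congr rfl fun p _ => by ring

end PowerSeries

theorem miller_recurrence_general {R : Type*} [CommRing R]
    (w : PowerSeries R)
    (m : ℕ)
    (a c : ℕ → R) (ha : ∀ k, a k = coeff k w) (hc : ∀ k, c k = coeff k (w ^ m)) :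
    c 0 = a 0 ^ m ∧
      ∀ k : ℕ, 1 ≤ k →
        (k : R) * a 0 * c k =
          ∑ j ∈ Finset.Icc 1 k, ((((m + 1 : ℤ) * j - k : ℤ) : R)) * a j * c (k - j) := by
  refine ⟨by simp [ha, hc, map_pow], fun k _ => ?_⟩
  have h := sum_antidiagonal_coeff_pow w m k
  rw [Nat.sum_antidiagonal_eq_sum_range_succ_mk, range_eq_Ico,
    sum_eq_sum_Ico_succ_bot k.succ_pos, zero_add, Nat.succ_eq_add_one,
    Ico_add_one_right_eq_Icc] at h
  have hsum : ∑ j ∈ Icc 1 k, ((((m + 1 : ℤ) * j - k : ℤ) : R)) * a j * c (k - j) =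
      ∑ j ∈ Icc 1 k, (m * j - (k - j : ℕ) : R) * coeff j w * coeff (k - j) (w ^ m) :=
    sum_congr rfl fun j hj => by
      rw [ha, hc, Nat.cast_sub (mem_Icc.1 hj).2]
      push_cast
      ring
  rw [hsum, eq_neg_of_add_eq_zero_right h, ha, hc]
  simp

theorem miller_recurrence {R : Type*} [CommRing R] [Algebra ℚ R]
    (w : PowerSeries R) (hunit : IsUnit (coeff 0 w))
    (m : ℕ) (hm : 0 < m)
    (a c : ℕ → R) (ha : ∀ k, a k = coeff k w) (hc : ∀ k, c k = coeff k (w ^ m)) :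
    c 0 = a 0 ^ m ∧
      ∀ k : ℕ, 1 ≤ k →
        (k : R) * a 0 * c k =
          ∑ j ∈ Finset.Icc 1 k, ((((m + 1 : ℤ) * j - k : ℤ) : R)) * a j * c (k - j) :=
  miller_recurrence_general w m a c ha hc
end

section
/- Let y be a real analytic function with y(0) ≠ 0 and let n be a positive integer. Define W(k) and Y(k) as the Taylor coefficients at 0 of y^n and y respectively. Then W(0) = Y(0)^n and for k ≥ 1, W(k) = (1/(k·Y(0)))·Σ_{j=1}^{k} ((n+1)·j − k)·Y(j)·W(k−j). -/
/-!
Put `w = yⁿ`. Then `y w' = n y' w`, and comparing Taylor coefficients of the two products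
(Leibniz rule) gives `∑_{i+j=k} j Yᵢ Wⱼ = n ∑_{i+j=k} i Yᵢ Wⱼ`. Using `i + j = k`, this says
`∑_{i+j=k} ((n+1) i - k) Yᵢ Wⱼ = 0`, whose `i = 0` term is `-k Y₀ W_k`; solve for `W_k`.
-/

open Finset Filter Topology

variable {𝕜 : Type*} [NontriviallyNormedField 𝕜]

noncomputable def taylorCoeff (f : 𝕜 → 𝕜) (a : 𝕜) (k : ℕ) : 𝕜 :=
  iteratedDeriv k f a / k.factorial

lemma taylorCoeff_zero (f : 𝕜 → 𝕜) (a : 𝕜) : taylorCoeff f a 0 = f a := by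
  simp [taylorCoeff]

lemma Filter.EventuallyEq.taylorCoeff_eq {f g : 𝕜 → 𝕜} {a : 𝕜} (h : f =ᶠ[𝓝 a] g) (k : ℕ) :
    taylorCoeff f a k = taylorCoeff g a k := by
  rw [taylorCoeff, taylorCoeff, h.iteratedDeriv_eq k]

lemma taylorCoeff_const_mul (c : 𝕜) (f : 𝕜 → 𝕜) (a : 𝕜) (k : ℕ) :
    taylorCoeff (fun x => c * f x) a k = c * taylorCoeff f a k := by
  simp only [taylorCoeff, iteratedDeriv_const_mul_field, mul_div_assoc]

lemma mul_deriv_pow {y : 𝕜 → 𝕜} {x : 𝕜} (hy : DifferentiableAt 𝕜 y x) (n : ℕ) :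
    y x * deriv (fun t => y t ^ n) x = n * (y x ^ n * deriv y x) := by
  rw [deriv_fun_pow hy]
  cases n with
  | zero => simp
  | succ n => simp only [Nat.add_sub_cancel, pow_succ]; ring

variable [CharZero 𝕜]

lemma taylorCoeff_deriv (f : 𝕜 → 𝕜) (a : 𝕜) (k : ℕ) :
    taylorCoeff (deriv f) a k = (k + 1) * taylorCoeff f a (k + 1) := by
  rw [taylorCoeff, taylorCoeff, ← iteratedDeriv_succ', Nat.factorial_succ]
  push_cast
  field_simp

lemma taylorCoeff_mul {f g : 𝕜 → 𝕜} {a : 𝕜} {k : ℕ} (hf : ContDiffAt 𝕜 k f a)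
    (hg : ContDiffAt 𝕜 k g a) :
    taylorCoeff (f * g) a k =
      ∑ p ∈ antidiagonal k, taylorCoeff f a p.1 * taylorCoeff g a p.2 := by
  rw [taylorCoeff, iteratedDeriv_mul hf hg, sum_div, Nat.sum_antidiagonal_eq_sum_range_succ_mk]
  refine sum_congr rfl fun i hi => ?_
  rw [Nat.cast_choose 𝕜 (mem_range_succ_iff.mp hi), taylorCoeff, taylorCoeff]
  have : (k.factorial : 𝕜) ≠ 0 := Nat.cast_ne_zero.mpr k.factorial_ne_zero
  field_simp

lemma taylorCoeff_mul_deriv {f g : 𝕜 → 𝕜} {a : 𝕜} {m : ℕ} (hf : ContDiffAt 𝕜 m f a)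
    (hg : ContDiffAt 𝕜 (m + 1) g a) :
    taylorCoeff (f * deriv g) a m =
      ∑ p ∈ antidiagonal (m + 1), (p.2 : 𝕜) * taylorCoeff f a p.1 * taylorCoeff g a p.2 := by
  rw [taylorCoeff_mul hf (hg.derivWithin le_rfl), Nat.sum_antidiagonal_succ']
  simp only [Nat.cast_zero, zero_mul, zero_add, taylorCoeff_deriv, Nat.cast_add_one]
  exact sum_congr rfl fun _ _ => by ring

lemma sum_antidiagonal_snd_mul_taylorCoeff_pow {y : 𝕜 → 𝕜} {a : 𝕜} {m : ℕ}
    (hy : ContDiffAt 𝕜 (m + 1) y a) (n : ℕ) :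
    ∑ p ∈ antidiagonal (m + 1), (p.2 : 𝕜) * taylorCoeff y a p.1 * taylorCoeff (y ^ n) a p.2 =
      n * ∑ p ∈ antidiagonal (m + 1),
        (p.1 : 𝕜) * taylorCoeff y a p.1 * taylorCoeff (y ^ n) a p.2 := by
  have hw : ContDiffAt 𝕜 (m + 1) (y ^ n) a := hy.pow n
  have hode : y * deriv (y ^ n) =ᶠ[𝓝 a] fun x => n * (y ^ n * deriv y) x := by
    filter_upwards [hy.eventually (by simp)] with x hx
    exact mul_deriv_pow (hx.differentiableAt (by simp)) n
  rw [← taylorCoeff_mul_deriv (hy.of_le (by simp)) hw, hode.taylorCoeff_eq,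
    taylorCoeff_const_mul, taylorCoeff_mul_deriv (hw.of_le (by simp)) hy,
    ← Nat.sum_antidiagonal_swap]
  simp only [Prod.fst_swap, Prod.snd_swap, mul_right_comm]

theorem taylorCoeff_pow_recurrence {y : 𝕜 → 𝕜} {a : 𝕜} {k : ℕ} (hy : ContDiffAt 𝕜 k y a)
    (n : ℕ) :
    k * taylorCoeff y a 0 * taylorCoeff (y ^ n) a k =
      ∑ j ∈ Icc 1 k, ((n + 1) * j - k) * taylorCoeff y a j * taylorCoeff (y ^ n) a (k - j) := by
  rcases k with _ | m
  · simp
  have hzero : ∑ p ∈ antidiagonal (m + 1),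
      ((n + 1) * (p.1 : 𝕜) - (m + 1 : ℕ)) * taylorCoeff y a p.1 * taylorCoeff (y ^ n) a p.2 =
        0 := by
    rw [← sub_eq_zero.mpr (sum_antidiagonal_snd_mul_taylorCoeff_pow hy n).symm, mul_sum,
      ← sum_sub_distrib]
    refine sum_congr rfl fun p hp => ?_
    rw [← mem_antidiagonal.mp hp]
    push_cast
    ring
  rw [Nat.sum_antidiagonal_eq_sum_range_succ_mk, sum_range_eq_add_Ico _ (by simp),
    Nat.succ_eq_add_one, Ico_add_one_right_eq_Icc] at hzero
  simp only [Nat.cast_zero, mul_zero, zero_sub, Nat.sub_zero] at hzero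
  linear_combination -hzero

theorem dtm_pow_rule_general (y : ℝ → ℝ) (hy : AnalyticAt ℝ y 0) (hy0 : y 0 ≠ 0)
    (n : ℕ) (W Y : ℕ → ℝ)
    (hW : ∀ k, W k = iteratedDeriv k (fun x => (y x) ^ n) 0 / (Nat.factorial k))
    (hY : ∀ k, Y k = iteratedDeriv k y 0 / (Nat.factorial k)) :
    W 0 = (Y 0) ^ n ∧
      ∀ k : ℕ, 1 ≤ k →
        W k = (1 / ((k : ℝ) * Y 0)) *
          ∑ j ∈ Finset.Icc 1 k, (((n : ℝ) + 1) * j - k) * Y j * W (k - j) := by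
  obtain rfl : W = taylorCoeff (y ^ n) 0 := funext hW
  obtain rfl : Y = taylorCoeff y 0 := funext hY
  refine ⟨by simp [taylorCoeff_zero], fun k hk => ?_⟩
  have hk0 : (k : ℝ) ≠ 0 := by exact_mod_cast Nat.one_le_iff_ne_zero.mp hk
  rw [← taylorCoeff_pow_recurrence hy.contDiffAt n, taylorCoeff_zero]
  field_simp

theorem dtm_pow_rule (y : ℝ → ℝ) (hy : AnalyticAt ℝ y 0) (hy0 : y 0 ≠ 0)
    (n : ℕ) (hn : 0 < n) (W Y : ℕ → ℝ)
    (hW : ∀ k, W k = iteratedDeriv k (fun x => (y x) ^ n) 0 / (Nat.factorial k))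
    (hY : ∀ k, Y k = iteratedDeriv k y 0 / (Nat.factorial k)) :
    W 0 = (Y 0) ^ n ∧
      ∀ k : ℕ, 1 ≤ k →
        W k = (1 / ((k : ℝ) * Y 0)) *
          ∑ j ∈ Finset.Icc 1 k, (((n : ℝ) + 1) * j - k) * Y j * W (k - j) :=
  dtm_pow_rule_general y hy hy0 n W Y hW hY
end
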